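/- Let s : ℝ^n → ℝ^d be continuous, Z = {(y, s(y)) : y ∈ ℝ^n} its graph, x ∈ ℝ^n and z = (x, s(x)). Suppose the tangent cone TC_z Z is contained in an n-dimensional linear subspace D of ℝ^n × ℝ^d satisfying D ∩ ({0} × ℝ^d) = {0}. Then D is the graph of a (unique) linear map L : ℝ^n → ℝ^d, and s is differentiable at x with derivative L. -/

import Mathlib

/-!
Since `D` meets `{0} × ℝᵈ` trivially and has dimension `n`, the first projection `D → ℝⁿ` is an
isomorphism, so `D` is the graph of a linear map `L`. If `s` were not differentiable at `x` with
derivative `L`, there would be `ε > 0` and points `yₖ → x` with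
`ε ‖yₖ - x‖ < ‖s yₖ - s x - L (yₖ - x)‖`. The normalized secants of the graph of `s` through
`(yₖ, s yₖ)` then lie in the closed cone `{v | ε ‖v.1‖ ≤ ‖v.2 - L v.1‖}`, and by compactness of the
unit sphere one of their limits is a unit vector of the tangent cone. It lies in this cone and in
the graph of `L`, whose intersection is `{0}`: a contradiction.
-/

open Filter Set

/-- Tangent cone of a set `Z ⊆ E` at a point `z`: the set consisting of `0` together with
all vectors `v = α • lim (zₙ − z)/‖zₙ − z‖` for some `α ∈ ℝ` and some sequence
`zₙ ∈ Z \ {z}` converging to `z`. -/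
def paperTangentCone {E : Type*} [NormedAddCommGroup E] [NormedSpace ℝ E]
    (Z : Set E) (z : E) : Set E :=
  {0} ∪ {v | ∃ (α : ℝ) (w : E) (c : ℕ → E),
    (∀ k, c k ∈ Z \ {z}) ∧ Tendsto c atTop (nhds z) ∧
    Tendsto (fun k => ‖c k - z‖⁻¹ • (c k - z)) atTop (nhds w) ∧ v = α • w}

theorem Submodule.exists_eq_graph_of_finrank_eq {K E F : Type*} [Field K] [AddCommGroup E]
    [Module K E] [FiniteDimensional K E] [AddCommGroup F] [Module K F]
    {D : Submodule K (E × F)} (hdim : Module.finrank K D = Module.finrank K E)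
    (htrans : D ⊓ Submodule.prod ⊥ ⊤ = ⊥) :
    ∃ L : E →ₗ[K] F, D = L.graph := by
  set f := (LinearMap.fst K E F).comp D.subtype
  have hf_inj : Function.Injective f := by
    refine (injective_iff_map_eq_zero f).mpr fun v hv => ?_
    have hv' : (v : E × F) ∈ D ⊓ Submodule.prod ⊥ ⊤ :=
      ⟨v.2, Submodule.mem_prod.mpr ⟨hv, Submodule.mem_top⟩⟩
    rw [htrans, Submodule.mem_bot] at hv'
    exact Subtype.ext hv'
  have : FiniteDimensional K D := Module.Finite.of_injective f hf_inj
  exact Submodule.exists_eq_graph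
    ⟨hf_inj, (LinearMap.injective_iff_surjective_of_finrank_eq_finrank hdim).mp hf_inj⟩

theorem exists_norm_eq_one_mem_paperTangentCone_inter {E : Type*} [NormedAddCommGroup E]
    [NormedSpace ℝ E] [ProperSpace E] {Z K : Set E} {z : E} (hK : IsClosed K)
    (hK_smul : ∀ t : ℝ, 0 ≤ t → ∀ v ∈ K, t • v ∈ K) {c : ℕ → E} (hcZ : ∀ k, c k ∈ Z \ {z})
    (hc : Tendsto c atTop (nhds z)) (hcK : ∀ k, c k - z ∈ K) :
    ∃ w ∈ paperTangentCone Z z ∩ K, ‖w‖ = 1 := by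
  set u := fun k => ‖c k - z‖⁻¹ • (c k - z)
  have hu : ∀ k, u k ∈ Metric.sphere (0 : E) 1 := fun k => by
    simpa [u] using norm_smul_inv_norm (𝕜 := ℝ) (sub_ne_zero.mpr (hcZ k).2)
  obtain ⟨w, hw, φ, hφ, hlim⟩ := (isCompact_sphere (0 : E) 1).tendsto_subseq hu
  refine ⟨w, ⟨Or.inr ⟨1, w, c ∘ φ, fun k => hcZ _, hc.comp hφ.tendsto_atTop, hlim,
    (one_smul ℝ w).symm⟩, ?_⟩, by simpa using hw⟩
  exact hK.mem_of_tendsto hlim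
    (Eventually.of_forall fun k => hK_smul _ (inv_nonneg.mpr (norm_nonneg _)) _ (hcK _))

theorem exists_seq_of_not_hasFDerivAt {𝕜 E F : Type*} [NontriviallyNormedField 𝕜]
    [NormedAddCommGroup E] [NormedSpace 𝕜 E] [NormedAddCommGroup F] [NormedSpace 𝕜 F]
    {s : E → F} {L : E →L[𝕜] F} {x : E} (h : ¬HasFDerivAt s L x) :
    ∃ ε > 0, ∃ y : ℕ → E, Tendsto y atTop (nhds x) ∧
      ∀ k, ε * ‖y k - x‖ < ‖s (y k) - s x - L (y k - x)‖ := by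
  rw [hasFDerivAt_iff_isLittleO, Asymptotics.isLittleO_iff] at h
  push Not at h
  obtain ⟨ε, hε, hfreq⟩ := h
  obtain ⟨y, hy, hyε⟩ := exists_seq_forall_of_frequently hfreq
  exact ⟨ε, hε, y, hy, hyε⟩

theorem hasFDerivAt_of_paperTangentCone_subset_graph {E F : Type*} [NormedAddCommGroup E]
    [NormedSpace ℝ E] [ProperSpace E] [NormedAddCommGroup F] [NormedSpace ℝ F] [ProperSpace F]
    {s : E → F} {x : E} (hs : ContinuousAt s x) {L : E →L[ℝ] F}
    (hTC : paperTangentCone {p : E × F | p.2 = s p.1} (x, s x) ⊆ {p | p.2 = L p.1}) :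
    HasFDerivAt s L x := by
  by_contra h
  obtain ⟨ε, hε, y, hy, hyε⟩ := exists_seq_of_not_hasFDerivAt h
  set K := {v : E × F | ε * ‖v.1‖ ≤ ‖v.2 - L v.1‖}
  have hK : IsClosed K := isClosed_le (by fun_prop) (by fun_prop)
  have hK_smul : ∀ t : ℝ, 0 ≤ t → ∀ v ∈ K, t • v ∈ K := fun t ht v hv => by
    simp only [K, mem_ofPred_eq, Prod.smul_fst, Prod.smul_snd, map_smul, ← smul_sub, norm_smul,
      Real.norm_of_nonneg ht, mul_left_comm ε]
    exact mul_le_mul_of_nonneg_left hv ht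
  have hyx : ∀ k, y k ≠ x := fun k hk => by simpa [hk] using hyε k
  obtain ⟨w, ⟨hwTC, hwK⟩, hw⟩ := exists_norm_eq_one_mem_paperTangentCone_inter
    (Z := {p : E × F | p.2 = s p.1}) (c := fun k => (y k, s (y k))) hK hK_smul
    (fun k => ⟨rfl, fun hk => hyx k (congrArg Prod.fst hk)⟩)
    (hy.prodMk_nhds (hs.tendsto.comp hy)) (fun k => (hyε k).le)
  have hw_graph : w.2 = L w.1 := hTC hwTC
  have hw₁ : w.1 = 0 := by
    simp only [K, mem_ofPred_eq, hw_graph, sub_self, norm_zero] at hwK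
    exact norm_le_zero_iff.mp (nonpos_of_mul_nonpos_right hwK hε)
  have hw₀ : w = 0 := Prod.ext hw₁ (by rw [hw_graph, hw₁, map_zero]; rfl)
  simp [hw₀] at hw

/-- Let `s : ℝⁿ → ℝ^d` be continuous, `Z` its graph, `x ∈ ℝⁿ` and `z = (x, s x)`. If the
tangent cone `TC_z Z` is contained in an `n`-dimensional subspace `D` with
`D ∩ ({0} × ℝ^d) = {0}`, then `D` is the graph of a unique linear map `L : ℝⁿ → ℝ^d`
and `s` is differentiable at `x` with derivative `L`. -/
theorem differentiable_of_tangentCone_in_graph_subspace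
    {n d : ℕ} (s : EuclideanSpace ℝ (Fin n) → EuclideanSpace ℝ (Fin d))
    (hs : Continuous s) (x : EuclideanSpace ℝ (Fin n))
    (D : Submodule ℝ (EuclideanSpace ℝ (Fin n) × EuclideanSpace ℝ (Fin d)))
    (hdim : Module.finrank ℝ D = n)
    (htrans : D ⊓ Submodule.prod ⊥ ⊤ = ⊥)
    (hTC : paperTangentCone {p : EuclideanSpace ℝ (Fin n) × EuclideanSpace ℝ (Fin d) |
      p.2 = s p.1} (x, s x) ⊆ D) :
    ∃ L : EuclideanSpace ℝ (Fin n) →L[ℝ] EuclideanSpace ℝ (Fin d),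
      (D : Set (EuclideanSpace ℝ (Fin n) × EuclideanSpace ℝ (Fin d))) = {p | p.2 = L p.1} ∧
      HasFDerivAt s L x ∧
      ∀ L' : EuclideanSpace ℝ (Fin n) →L[ℝ] EuclideanSpace ℝ (Fin d),
        (D : Set (EuclideanSpace ℝ (Fin n) × EuclideanSpace ℝ (Fin d))) = {p | p.2 = L' p.1} →
        L' = L := by
  obtain ⟨L, rfl⟩ := Submodule.exists_eq_graph_of_finrank_eq
    (hdim.trans (finrank_euclideanSpace_fin (𝕜 := ℝ)).symm) htrans
  refine ⟨LinearMap.toContinuousLinearMap L, rfl,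
    hasFDerivAt_of_paperTangentCone_subset_graph hs.continuousAt hTC, fun L' hL' => ?_⟩
  refine ContinuousLinearMap.ext fun v => ?_
  have hv : (v, L v) ∈ (L.graph : Set _) := rfl
  rw [hL'] at hv
  exact hv.symm
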